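/- arXiv:2203.05888 — 4 statements merged into one kernel-verified Lean document; each statement's English description precedes it below -/
import Mathlib

section
/- Let G be a digraph with maxdeg(G) < ∞, let Δ ≥ 1 be the maximal vertex degree of Rel(G), and let 𝐑 be a local rule on G. If for every x ∈ V(G) one has 1 − |𝐑(x)|/b^{|Var(x)|} < 1/(eΔ), then there exists a colouring f : V(G) → b that satisfies 𝐑. -/
open MeasureTheory
open scoped Classical ENNReal

namespace MTLLL

variable {V : Type*} {ι : Type*}

/-- The out-neighbourhood `Var(x)` of a vertex `x` in the digraph with edge relation `E`. -/
def Var (E : V → V → Prop) (x : V) : Set V := {y | E x y}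

/-- The in-neighbourhood `Cl(x)`. -/
def Cl (E : V → V → Prop) (x : V) : Set V := {y | E y x}

/-- The neighbourhood `N(x) = Var(x) ∪ Cl(x)`. -/
def Nbr (E : V → V → Prop) (x : V) : Set V := Var E x ∪ Cl E x

/-- The maximal vertex degree of a digraph, as an extended natural number. -/
noncomputable def maxdeg (E : V → V → Prop) : ℕ∞ := ⨆ x : V, (Nbr E x).encard

/-- The digraph `Rel(G)`: edges join vertices whose out-neighbourhoods intersect. -/
def Rel (E : V → V → Prop) (x y : V) : Prop := (Var E x ∩ Var E y).Nonempty

/-- A set is independent in a digraph if no edge other than a self-loop joins two of its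
elements. -/
def Indep (E : V → V → Prop) (I : Set V) : Prop :=
  ∀ x ∈ I, ∀ y ∈ I, x ≠ y → ¬ E x y

/-- `I` is a maximal independent subset of `X`. -/
def MaxIndepIn (E : V → V → Prop) (X I : Set V) : Prop :=
  I ⊆ X ∧ Indep E I ∧ ∀ J : Set V, I ⊆ J → J ⊆ X → Indep E J → J = I

/-- A local rule: for each vertex `x` a set of colourings of `Var(x)` by `b` colours,
imposing no restriction when `Var(x)` is empty. -/
structure LocalRule (E : V → V → Prop) (b : ℕ) where
  R : ∀ x : V, Set (Var E x → Fin b)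
  isFull_of_empty : ∀ x : V, Var E x = ∅ → R x = Set.univ

/-- The complement rule `𝐑ᶜ(x)`. -/
def LocalRule.Rc {E : V → V → Prop} {b : ℕ} (R : LocalRule E b) (x : V) :
    Set (Var E x → Fin b) := (R.R x)ᶜ

/-- A colouring satisfies the rule if at every vertex its restriction to `Var(x)` obeys
`𝐑(x)`. -/
def Satisfies (E : V → V → Prop) {b : ℕ} (R : LocalRule E b) (f : V → Fin b) : Prop :=
  ∀ x : V, (fun y : Var E x => f y.1) ∈ R.R x

/-- The bad set `B(f)` of clauses violated by `f`. -/
def bad (E : V → V → Prop) {b : ℕ} (R : LocalRule E b) (f : V → Fin b) : Set V :=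
  {x : V | (fun y : Var E x => f y.1) ∈ R.Rc x}

/-- The symmetrisation of the digraph, with loops removed, as a simple graph;
it is used to measure graph distances. -/
def toSG (E : V → V → Prop) : SimpleGraph V where
  Adj x y := x ≠ y ∧ (E x y ∨ E y x)
  symm := ⟨fun x y h => ⟨Ne.symm h.1, h.2.symm⟩⟩
  loopless := ⟨fun x h => h.1 rfl⟩

/-- The ball of radius `r` around `x` in graph distance (ignoring orientations). -/
def ball (E : V → V → Prop) (x : V) (r : ℕ) : Set V :=
  {y | ∃ p : (toSG E).Walk x y, p.length ≤ r}

/-- The class `subexp(R,ε,d)`: max degree at most `d` and balls of radius `3R` of size at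
most `(1+ε)^R`. -/
def Subexp (E : V → V → Prop) (Rad d : ℕ) (ε : ℝ) : Prop :=
  maxdeg E ≤ (d : ℕ∞) ∧
  ∀ x : V, (ball E x (3 * Rad)).Finite ∧ ((ball E x (3 * Rad)).ncard : ℝ) ≤ (1 + ε) ^ Rad

/-- A partition (encoded by the map sending a vertex to its part) is `r`-sparse if distinct
vertices in the same part are at graph distance greater than `2r`. -/
def Sparse (E : V → V → Prop) (part : V → ι) (r : ℕ) : Prop :=
  ∀ x y : V, part x = part y → x ≠ y → y ∉ ball E x (2 * r)

/-- An independence function: `I X` is always a maximal independent subset of `X`. -/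
def IndepFun (E : V → V → Prop) (I : Set V → Set V) : Prop :=
  ∀ X : Set V, MaxIndepIn E X (I X)

/-- `Var` of a set of vertices. -/
def VarSet (E : V → V → Prop) (A : Set V) : Set V := ⋃ x ∈ A, Var E x

/-- One run of the Moser–Tardos algorithm: `(mtAux j).1 = MT^j` and `(mtAux j).2 = h^{j+1}`. -/
noncomputable def mtAux (E : V → V → Prop) {b : ℕ} (R : LocalRule E b)
    (part : V → ι) (I : Set V → Set V) (rnd : ι × ℕ → Fin b) :
    ℕ → (V → Fin b) × (V → ℕ)
  | 0 => (fun x => rnd (part x, 0), fun _ => 1)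
  | j + 1 =>
    let p := mtAux E R part I rnd j
    (fun x => if x ∈ VarSet E (I (bad E R p.1)) then rnd (part x, p.2 x) else p.1 x,
     fun x => if x ∈ VarSet E (I (bad E R p.1)) then p.2 x + 1 else p.2 x)

/-- The colouring `MT^j` produced by the Moser–Tardos algorithm. -/
noncomputable def MT (E : V → V → Prop) {b : ℕ} (R : LocalRule E b)
    (part : V → ι) (I : Set V → Set V) (rnd : ι × ℕ → Fin b) (j : ℕ) : V → Fin b :=
  (mtAux E R part I rnd j).1

/-- The resampling counters `h^k`. -/
noncomputable def hres (E : V → V → Prop) {b : ℕ} (R : LocalRule E b)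
    (part : V → ι) (I : Set V → Set V) (rnd : ι × ℕ → Fin b) : ℕ → V → ℕ
  | 0 => fun _ => 0
  | j + 1 => (mtAux E R part I rnd j).2

/-- The total number `h^∞(x)` of resamplings at `x`. -/
noncomputable def hinf (E : V → V → Prop) {b : ℕ} (R : LocalRule E b)
    (part : V → ι) (I : Set V → Set V) (rnd : ι × ℕ → Fin b) (x : V) : ℕ∞ :=
  ⨆ k : ℕ, (hres E R part I rnd k x : ℕ∞)

/-- `μ` is the product over `ι × ℕ` of uniform measures on `Fin b`: it is a probability
measure giving each cylinder set its natural measure. -/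
def IsUnifProduct {ι : Type*} (b : ℕ) (μ : Measure ((ι × ℕ) → Fin b)) : Prop :=
  IsProbabilityMeasure μ ∧
  ∀ (s : Finset (ι × ℕ)) (g : (ι × ℕ) → Fin b),
    μ {rnd | ∀ p ∈ s, rnd p = g p} = (1 / (b : ℝ≥0∞)) ^ s.card

end MTLLL

/-!
For a finite set `T` of clauses only the finitely many vertices of `⋃ x ∈ T, Var(x)` matter, and
there the statement is the symmetric Lovász Local Lemma for the uniform distribution on their
colourings, proved by counting. Writing `N(S)` for the colourings violating no clause of `S`, one
shows by induction on `S` that `|A_i ∩ N(S)| · |Ω| ≤ e · |A_i| · |N(S)|`: the clauses of `S`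
sharing no variable with `i` are independent of `A_i`, and each of the at most `Δ - 1` others
shrinks `N` by a factor at least `1 - 1/Δ`, in total at least `(1 - 1/Δ) ^ (Δ - 1) ≥ 1/e`. Hence
`N(T)` is nonempty. Since every `Var(x)` is finite, each clause is a clopen condition on `b^V`, and
compactness of `b^V` passes from finite `T` to all of `V`.
-/

namespace MTLLL

open Finset

section Counting

variable {α β : Type*}

def DeterminedBy (s : Set α) (A : Finset (α → β)) : Prop :=
  ∀ f g : α → β, (∀ a ∈ s, f a = g a) → f ∈ A → g ∈ A

theorem DeterminedBy.mono {s t : Set α} {A : Finset (α → β)} (h : DeterminedBy s A)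
    (hst : s ⊆ t) : DeterminedBy t A :=
  fun f g hfg => h f g fun a ha => hfg a (hst ha)

variable [Fintype α] [Fintype β]

theorem card_inter_mul_card_eq_of_determinedBy {s : Set α} {A B : Finset (α → β)}
    (hA : DeterminedBy s A) (hB : DeterminedBy sᶜ B) :
    #(A ∩ B) * Fintype.card (α → β) = #A * #B := by
  have swap_swap : ∀ f g : α → β, s.piecewise (s.piecewise f g) (s.piecewise g f) = f := by
    intro f g; funext a; by_cases ha : a ∈ s <;> simp [ha]
  -- Exchanging the values of `f` and `g` off `s` maps `(A ∩ B) × Ω` bijectively onto `A × B`.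
  have key : #((A ∩ B) ×ˢ (univ : Finset (α → β))) = #(A ×ˢ B) := by
    refine card_nbij' (fun p => (s.piecewise p.1 p.2, s.piecewise p.2 p.1))
      (fun p => (s.piecewise p.1 p.2, s.piecewise p.2 p.1)) ?_ ?_ ?_ ?_
    · rintro ⟨f, g⟩ hfg
      simp only [coe_product, coe_inter, Set.mem_prod, Set.mem_inter_iff, mem_coe] at hfg ⊢
      exact ⟨hA f _ (fun a ha => by simp [ha]) hfg.1.1,
        hB f _ (fun a ha => by simp [Set.notMem_of_mem_compl ha]) hfg.1.2⟩
    · rintro ⟨f, g⟩ hfg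
      simp only [coe_product, coe_inter, Set.mem_prod, Set.mem_inter_iff, mem_coe,
        coe_univ, Set.mem_univ, and_true] at hfg ⊢
      exact ⟨hA f _ (fun a ha => by simp [ha]) hfg.1,
        hB g _ (fun a ha => by simp [Set.notMem_of_mem_compl ha]) hfg.2⟩
    · rintro ⟨f, g⟩ -
      simp only [swap_swap]
    · rintro ⟨f, g⟩ -
      simp only [swap_swap]
  simpa [card_product] using key

theorem card_filter_comp_mem_mul_pow [DecidableEq α] {γ : Type*} [Fintype γ] (e : γ ↪ α)
    (P : Set (γ → β)) :
    #{f : α → β | f ∘ e ∈ P} * Fintype.card β ^ Fintype.card γ =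
      Nat.card P * Fintype.card β ^ Fintype.card α := by
  let split : (α → β) ≃ (γ → β) × ({a // a ∉ Set.range e} → β) :=
    (Equiv.piEquivPiSubtypeProd (· ∈ Set.range e) fun _ => β).trans
      ((Equiv.arrowCongr (Equiv.ofInjective e e.injective).symm (Equiv.refl β)).prodCongr
        (Equiv.refl _))
  have hsplit : ∀ f, (split f).1 = f ∘ e := fun f => by
    funext c; simp [split]
  have hfiber : {f : α → β // f ∘ e ∈ P} ≃ P × ({a // a ∉ Set.range e} → β) :=
    (split.subtypeEquiv fun f => by rw [hsplit]).trans Equiv.prodSubtypeFstEquivSubtypeProd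
  have hΩ := Fintype.card_congr split
  simp only [Fintype.card_fun, Fintype.card_prod] at hΩ
  rw [← Fintype.card_subtype, ← Nat.card_eq_fintype_card, Nat.card_congr hfiber, Nat.card_prod,
    Nat.card_fun, hΩ]
  simp only [Nat.card_eq_fintype_card]
  ring

end Counting

section Avoiding

variable {α β ι : Type*} [Fintype α] [Fintype β] (A : ι → Finset (α → β))

noncomputable def avoiding (S : Finset ι) : Finset (α → β) := {f | ∀ i ∈ S, f ∉ A i}

variable {A}

theorem mem_avoiding {S : Finset ι} {f : α → β} : f ∈ avoiding A S ↔ ∀ i ∈ S, f ∉ A i := by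
  simp [avoiding]

theorem avoiding_empty : avoiding A ∅ = univ := by
  ext f; simp [mem_avoiding]

theorem avoiding_anti {S S' : Finset ι} (h : S ⊆ S') : avoiding A S' ⊆ avoiding A S :=
  fun _ hf => mem_avoiding.2 fun i hi => mem_avoiding.1 hf i (h hi)

theorem card_avoiding_insert_add (j : ι) (S : Finset ι) :
    #(avoiding A (insert j S)) + #(A j ∩ avoiding A S) = #(avoiding A S) := by
  have : avoiding A (insert j S) = avoiding A S \ A j := by
    ext f; simp only [mem_avoiding, mem_insert, mem_sdiff]; grind
  rw [this, inter_comm, card_sdiff_add_card_inter]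

theorem inter_avoiding_eq_empty {i : ι} {S : Finset ι} (hi : i ∈ S) :
    A i ∩ avoiding A S = ∅ := by
  ext f; simp only [mem_inter, mem_avoiding, notMem_empty, iff_false, not_and, not_forall, not_not]
  exact fun hf => ⟨i, hi, hf⟩

theorem DeterminedBy.avoiding {s : Set α} {S : Finset ι} (h : ∀ i ∈ S, DeterminedBy s (A i)) :
    DeterminedBy s (avoiding A S) := fun f g hfg hf =>
  mem_avoiding.2 fun i hi hg => mem_avoiding.1 hf i hi (h i hi g f (fun a ha => (hfg a ha).symm) hg)

end Avoiding

theorem le_exp_one_mul_of_pow_mul_le {d k x y : ℕ} (hk : k ≤ d)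
    (h : d ^ k * x ≤ (d + 1) ^ k * y) : (x : ℝ) ≤ Real.exp 1 * y := by
  rcases Nat.eq_zero_or_pos d with rfl | hd
  · obtain rfl : k = 0 := by omega
    have hxy : (x : ℝ) ≤ y := by exact_mod_cast (by simpa using h)
    nlinarith [Real.one_le_exp zero_le_one, (Nat.cast_nonneg y : (0 : ℝ) ≤ y)]
  have hd' : (0 : ℝ) < d := by exact_mod_cast hd
  refine le_of_mul_le_mul_left ?_ (pow_pos hd' k)
  calc (d : ℝ) ^ k * x ≤ ((d : ℝ) + 1) ^ k * y := by exact_mod_cast h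
    _ = (1 + (d : ℝ)⁻¹) ^ k * (d : ℝ) ^ k * y := by rw [← mul_pow]; field_simp
    _ ≤ (1 + (d : ℝ)⁻¹) ^ d * (d : ℝ) ^ k * y := by
        gcongr
        exact le_add_of_nonneg_right (by positivity)
    _ ≤ Real.exp 1 * (d : ℝ) ^ k * y := by gcongr; exact Real.one_add_inv_pow_le_exp
    _ = (d : ℝ) ^ k * (Real.exp 1 * y) := by ring

section LocalLemma

variable {α β ι : Type*} [Fintype α] [Fintype β] {A : ι → Finset (α → β)} {d : ℕ}

theorem card_inter_avoiding_mul_lt {i : ι} {S : Finset ι}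
    (hcond : (#(A i ∩ avoiding A S) : ℝ) * Fintype.card (α → β) ≤
      Real.exp 1 * #(A i) * #(avoiding A S))
    (hp : Real.exp 1 * (d + 1) * #(A i) < Fintype.card (α → β)) (hpos : 0 < #(avoiding A S)) :
    #(A i ∩ avoiding A S) * (d + 1) < #(avoiding A S) := by
  have hΩ : (0 : ℝ) < Fintype.card (α → β) := lt_of_le_of_lt (by positivity) hp
  have key : ((#(A i ∩ avoiding A S) * (d + 1) : ℕ) : ℝ) * Fintype.card (α → β) <
      (#(avoiding A S) : ℝ) * Fintype.card (α → β) := by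
    push_cast
    calc _ = (#(A i ∩ avoiding A S) : ℝ) * Fintype.card (α → β) * (d + 1) := by ring
      _ ≤ Real.exp 1 * #(A i) * #(avoiding A S) * (d + 1) := by gcongr
      _ = Real.exp 1 * (d + 1) * #(A i) * #(avoiding A S) := by ring
      _ < Fintype.card (α → β) * #(avoiding A S) := by gcongr
      _ = _ := by ring
  exact_mod_cast lt_of_mul_lt_mul_right key hΩ.le

theorem card_inter_avoiding_mul_le {i : ι} {S : Finset ι}
    (hcond : (#(A i ∩ avoiding A S) : ℝ) * Fintype.card (α → β) ≤
      Real.exp 1 * #(A i) * #(avoiding A S))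
    (hp : Real.exp 1 * (d + 1) * #(A i) < Fintype.card (α → β)) :
    #(A i ∩ avoiding A S) * (d + 1) ≤ #(avoiding A S) := by
  rcases (#(avoiding A S)).eq_zero_or_pos with h | h
  · simp [card_eq_zero.1 h]
  · exact (card_inter_avoiding_mul_lt hcond hp h).le

theorem pow_mul_card_avoiding_le {U T : Finset ι} (hUT : Disjoint U T)
    (hstep : ∀ j ∈ T, ∀ U' ⊆ U ∪ T, j ∉ U' →
      #(A j ∩ avoiding A U') * (d + 1) ≤ #(avoiding A U')) :
    d ^ #T * #(avoiding A U) ≤ (d + 1) ^ #T * #(avoiding A (U ∪ T)) := by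
  induction T using Finset.induction_on with
  | empty => simp
  | insert y T hyT ih =>
    obtain ⟨hyU, hUT⟩ := disjoint_insert_right.1 hUT
    have hsub : U ∪ T ⊆ U ∪ insert y T := union_subset_union_right (subset_insert _ _)
    have ih := ih hUT fun j hj U' hU' => hstep j (mem_insert_of_mem hj) U' (hU'.trans hsub)
    have hy := hstep y (mem_insert_self _ _) (U ∪ T) hsub (by simp [hyU, hyT])
    have hsplit := card_avoiding_insert_add (A := A) y (U ∪ T)
    have hshrink : d * #(avoiding A (U ∪ T)) ≤ (d + 1) * #(avoiding A (insert y (U ∪ T))) := by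
      nlinarith
    rw [card_insert_of_notMem hyT, union_insert]
    calc d ^ (#T + 1) * #(avoiding A U) = d * (d ^ #T * #(avoiding A U)) := by ring
      _ ≤ d * ((d + 1) ^ #T * #(avoiding A (U ∪ T))) := by gcongr
      _ = (d + 1) ^ #T * (d * #(avoiding A (U ∪ T))) := by ring
      _ ≤ (d + 1) ^ #T * ((d + 1) * #(avoiding A (insert y (U ∪ T)))) := by gcongr
      _ = _ := by ring

variable [Fintype ι]

noncomputable def dependents (vbl : ι → Set α) (i : ι) : Finset ι :=
  {j | j ≠ i ∧ ¬Disjoint (vbl i) (vbl j)}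

variable {vbl : ι → Set α}

-- The counting form of `P(A i | no A j with j ∈ S) ≤ e · P(A i)`.
theorem card_inter_avoiding_mul_card_le (hdet : ∀ i, DeterminedBy (vbl i) (A i))
    (hdeg : ∀ i, #(dependents vbl i) ≤ d)
    (hp : ∀ i, Real.exp 1 * (d + 1) * #(A i) < Fintype.card (α → β)) (S : Finset ι) (i : ι) :
    (#(A i ∩ avoiding A S) : ℝ) * Fintype.card (α → β) ≤
      Real.exp 1 * #(A i) * #(avoiding A S) := by
  induction S using Finset.strongInduction generalizing i with
  | H S ih =>
  by_cases hi : i ∈ S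
  · rw [inter_avoiding_eq_empty hi]
    simp only [card_empty, CharP.cast_eq_zero, zero_mul]
    positivity
  set S₂ := S.filter fun j => Disjoint (vbl i) (vbl j)
  set S₁ := S.filter fun j => ¬Disjoint (vbl i) (vbl j)
  have hS₁ : #S₁ ≤ d := by
    refine (card_le_card fun j hj => ?_).trans (hdeg i)
    obtain ⟨hjS, hj⟩ := mem_filter.1 hj
    exact mem_filter.2 ⟨mem_univ _, fun hji => hi (hji ▸ hjS), hj⟩
  have hS : S₂ ∪ S₁ = S := filter_union_filter_not_eq _ S
  have hgrow : d ^ #S₁ * #(avoiding A S₂) ≤ (d + 1) ^ #S₁ * #(avoiding A S) := by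
    have h := pow_mul_card_avoiding_le (disjoint_filter_filter_not S S _)
      fun j hj U hU hjU => card_inter_avoiding_mul_le
        (ih U (ssubset_of_subset_of_ne (hS ▸ hU) fun hUS => hjU (hUS ▸ (mem_filter.1 hj).1)) j)
        (hp j)
    rwa [hS] at h
  have hind : #(A i ∩ avoiding A S₂) * Fintype.card (α → β) = #(A i) * #(avoiding A S₂) :=
    card_inter_mul_card_eq_of_determinedBy (hdet i) (DeterminedBy.avoiding fun j hj =>
      (hdet j).mono (mem_filter.1 hj).2.subset_compl_left)
  calc (#(A i ∩ avoiding A S) : ℝ) * Fintype.card (α → β)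
      ≤ #(A i ∩ avoiding A S₂) * Fintype.card (α → β) := by
        gcongr; exact avoiding_anti (filter_subset _ _)
    _ = #(A i) * #(avoiding A S₂) := by exact_mod_cast hind
    _ ≤ #(A i) * (Real.exp 1 * #(avoiding A S)) := by
        gcongr; exact le_exp_one_mul_of_pow_mul_le hS₁ hgrow
    _ = _ := by ring

theorem exists_forall_notMem_of_exp_mul_card_lt [Nonempty β]
    (hdet : ∀ i, DeterminedBy (vbl i) (A i)) (hdeg : ∀ i, #(dependents vbl i) ≤ d)
    (hp : ∀ i, Real.exp 1 * (d + 1) * #(A i) < (Fintype.card β : ℝ) ^ Fintype.card α) :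
    ∃ f : α → β, ∀ i, f ∉ A i := by
  replace hp : ∀ i, Real.exp 1 * (d + 1) * #(A i) < Fintype.card (α → β) := fun i => by
    simpa [Fintype.card_fun] using hp i
  have hpos : ∀ S : Finset ι, 0 < #(avoiding A S) := by
    intro S
    induction S using Finset.induction_on with
    | empty => rw [avoiding_empty, card_univ]; exact Fintype.card_pos
    | insert j S _ ih =>
      have hlt := card_inter_avoiding_mul_lt
        (card_inter_avoiding_mul_card_le hdet hdeg hp S j) (hp j) ih
      have hsplit := card_avoiding_insert_add (A := A) j S
      nlinarith
  obtain ⟨f, hf⟩ := card_pos.1 (hpos univ)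
  exact ⟨f, fun i => mem_avoiding.1 hf i (mem_univ i)⟩

end LocalLemma

theorem exists_forall_restrict_mem_of_forall_finset {V β : Type*} [Finite β] (s : V → Set V)
    (hs : ∀ x, (s x).Finite) (P : ∀ x, Set (s x → β))
    (h : ∀ T : Finset V, ∃ f : V → β, ∀ x ∈ T, (fun y : s x => f y) ∈ P x) :
    ∃ f : V → β, ∀ x, (fun y : s x => f y) ∈ P x := by
  let _ : TopologicalSpace β := ⊥
  have : DiscreteTopology β := ⟨rfl⟩
  have hclosed : ∀ x, IsClosed {f : V → β | (fun y : s x => f y) ∈ P x} := fun x => by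
    have := (hs x).to_subtype
    exact (isClosed_discrete (P x)).preimage (continuous_pi fun y => continuous_apply _)
  obtain ⟨f, -, hf⟩ := isCompact_univ.inter_iInter_nonempty _ hclosed fun T => by
    obtain ⟨f, hf⟩ := h T
    exact ⟨f, trivial, Set.mem_iInter₂.2 hf⟩
  exact ⟨f, Set.mem_iInter.1 hf⟩

section Colouring

variable {V : Type*} {E : V → V → Prop} {b : ℕ}

theorem finite_nbr_of_maxdeg_lt_top (hfin : maxdeg E < ⊤) (x : V) : (Nbr E x).Finite :=
  Set.encard_lt_top_iff.1 ((le_iSup (fun y => (Nbr E y).encard) x).trans_lt hfin)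

-- `Rel E x x` holds as soon as `Var E x` is nonempty, so `x` is one of its own `d + 1` neighbours.
theorem encard_setOf_ne_rel_le {d : ℕ} (hΔ : maxdeg (Rel E) = ((d + 1 : ℕ) : ℕ∞)) (x : V) :
    {y | y ≠ x ∧ Rel E x y}.encard ≤ d := by
  by_cases hx : Rel E x x
  · have hsub : insert x {y | y ≠ x ∧ Rel E x y} ⊆ Nbr (Rel E) x := by
      rintro y (rfl | hy)
      · exact Or.inl hx
      · exact Or.inl hy.2
    have h := ((Set.encard_le_encard hsub).trans
      (le_iSup (fun y => (Nbr (Rel E) y).encard) x)).trans hΔ.le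
    rw [Set.encard_insert_of_notMem fun h => h.1 rfl, Nat.cast_succ] at h
    exact (ENat.add_le_add_iff_right ENat.one_ne_top).1 h
  · have hempty : {y | y ≠ x ∧ Rel E x y} = ∅ :=
      Set.eq_empty_of_forall_notMem fun y ⟨_, z, hzx, _⟩ => hx ⟨z, hzx, hzx⟩
    simp [hempty]

theorem natCard_add_natCard_rc (R : LocalRule E b) {x : V} (hx : (Var E x).Finite) :
    Nat.card (R.R x) + Nat.card (R.Rc x) = b ^ (Var E x).ncard := by
  have := hx.to_subtype
  rw [Nat.card_coe_set_eq, Nat.card_coe_set_eq, LocalRule.Rc, Set.ncard_add_ncard_compl,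
    Nat.card_fun, Nat.card_fin, Nat.card_coe_set_eq]

theorem mul_natCard_rc_lt (R : LocalRule E b) {x : V} (hx : (Var E x).Finite) (hb : 0 < b)
    {c : ℝ} (hc : 0 < c)
    (h : 1 - (Nat.card (R.R x) : ℝ) / (b : ℝ) ^ (Var E x).ncard < 1 / c) :
    c * Nat.card (R.Rc x) < (b : ℝ) ^ (Var E x).ncard := by
  have hB : (0 : ℝ) < (b : ℝ) ^ (Var E x).ncard := by positivity
  have hsum : (Nat.card (R.R x) : ℝ) + Nat.card (R.Rc x) = (b : ℝ) ^ (Var E x).ncard := by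
    exact_mod_cast natCard_add_natCard_rc R hx
  have hcompl : 1 - (Nat.card (R.R x) : ℝ) / (b : ℝ) ^ (Var E x).ncard =
      Nat.card (R.Rc x) / (b : ℝ) ^ (Var E x).ncard := by
    field_simp; linarith
  rw [hcompl, div_lt_div_iff₀ hB hc] at h
  linarith

theorem mul_card_filter_comp_inclusion_lt (R : LocalRule E b) (hb : 0 < b) {W : Set V}
    [Fintype W] {x : V} (hx : Var E x ⊆ W) {c : ℝ}
    (hc : c * Nat.card (R.Rc x) < (b : ℝ) ^ (Var E x).ncard) :
    c * #{g : W → Fin b | g ∘ Set.inclusion hx ∈ R.Rc x} < (b : ℝ) ^ Fintype.card W := by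
  have := (W.toFinite.subset hx).fintype
  have hcount := card_filter_comp_mem_mul_pow (β := Fin b)
    ⟨Set.inclusion hx, Set.inclusion_injective hx⟩ (R.Rc x)
  rw [Fintype.card_fin, ← Nat.card_eq_fintype_card (α := Var E x), Nat.card_coe_set_eq]
    at hcount
  have hcountR : (#{g : W → Fin b | g ∘ Set.inclusion hx ∈ R.Rc x} : ℝ) *
      (b : ℝ) ^ (Var E x).ncard = Nat.card (R.Rc x) * (b : ℝ) ^ Fintype.card W := by
    exact_mod_cast hcount
  have hB : (0 : ℝ) < (b : ℝ) ^ (Var E x).ncard := by positivity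
  refine lt_of_mul_lt_mul_right ?_ hB.le
  calc c * #{g : W → Fin b | g ∘ Set.inclusion hx ∈ R.Rc x} * (b : ℝ) ^ (Var E x).ncard
      = c * Nat.card (R.Rc x) * (b : ℝ) ^ Fintype.card W := by rw [mul_assoc, hcountR, mul_assoc]
    _ < (b : ℝ) ^ (Var E x).ncard * (b : ℝ) ^ Fintype.card W := by gcongr
    _ = _ := mul_comm _ _

theorem card_dependents_preimage_var_le {T : Finset V} {W : Set V} {d : ℕ}
    (hdeg : ∀ x, {y | y ≠ x ∧ Rel E x y}.encard ≤ d) (x : T) :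
    #(dependents (fun x : T => (Subtype.val ⁻¹' Var E x : Set W)) x) ≤ d := by
  have hsub : (((dependents (fun x : T => (Subtype.val ⁻¹' Var E x : Set W)) x).map
      (Function.Embedding.subtype _) : Finset V) : Set V) ⊆ {y | y ≠ x ∧ Rel E x y} := by
    intro y hy
    simp only [coe_map, Function.Embedding.coe_subtype, Set.mem_image, mem_coe, dependents,
      mem_filter, mem_univ, true_and] at hy
    obtain ⟨y, ⟨hne, hdisj⟩, rfl⟩ := hy
    obtain ⟨w, hwx, hwy⟩ := Set.not_disjoint_iff.1 hdisj
    exact ⟨fun h => hne (Subtype.ext h), w, hwx, hwy⟩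
  have h := (Set.encard_le_encard hsub).trans (hdeg x)
  rw [Set.encard_coe_eq_coe_finsetCard, card_map] at h
  exact_mod_cast h

theorem exists_forall_mem_finset_restrict_mem (R : LocalRule E b) (hb : 0 < b)
    (hVar : ∀ x, (Var E x).Finite) {d : ℕ} (hdeg : ∀ x, {y | y ≠ x ∧ Rel E x y}.encard ≤ d)
    (hp : ∀ x, Real.exp 1 * (d + 1) * Nat.card (R.Rc x) < (b : ℝ) ^ (Var E x).ncard)
    (T : Finset V) :
    ∃ f : V → Fin b, ∀ x ∈ T, (fun y : Var E x => f y) ∈ R.R x := by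
  have : Nonempty (Fin b) := ⟨⟨0, hb⟩⟩
  set W : Set V := ⋃ x ∈ T, Var E x
  have hW : ∀ x ∈ T, Var E x ⊆ W := fun x hx => Set.subset_biUnion_of_mem (u := Var E) hx
  have := (T.finite_toSet.biUnion fun x _ => hVar x).fintype
  let A : T → Finset (W → Fin b) := fun x => {g | g ∘ Set.inclusion (hW x x.2) ∈ R.Rc x}
  have hdet : ∀ x : T, DeterminedBy (Subtype.val ⁻¹' Var E x) (A x) := fun x g g' hgg' hg => by
    have : g' ∘ Set.inclusion (hW x x.2) = g ∘ Set.inclusion (hW x x.2) :=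
      funext fun y => (hgg' _ y.2).symm
    simpa [A, this] using hg
  obtain ⟨g, hg⟩ := exists_forall_notMem_of_exp_mul_card_lt hdet
    (card_dependents_preimage_var_le hdeg) fun x => by
      simpa using mul_card_filter_comp_inclusion_lt R hb (hW x x.2) (hp x)
  refine ⟨fun v => if h : v ∈ W then g ⟨v, h⟩ else ⟨0, hb⟩, fun x hx => ?_⟩
  have hrestrict : (fun y : Var E x => if h : (y : V) ∈ W then g ⟨y, h⟩ else ⟨0, hb⟩) =
      g ∘ Set.inclusion (hW x hx) := funext fun y => dif_pos (hW x hx y.2)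
  rw [hrestrict]
  simpa [A, LocalRule.Rc] using hg ⟨x, hx⟩

end Colouring

end MTLLL

open MTLLL in
theorem lll_exists_satisfying_colouring_general
    {V : Type*} (E : V → V → Prop) (b : ℕ) (hb : 1 < b)
    (R : LocalRule E b) (hfin : maxdeg E < ⊤)
    (Δ : ℕ) (hΔ : maxdeg (Rel E) = (Δ : ℕ∞)) (hΔ1 : 1 ≤ Δ)
    (hmain : ∀ x : V,
      1 - (Nat.card (R.R x) : ℝ) / (b : ℝ) ^ (Var E x).ncard < 1 / (Real.exp 1 * Δ)) :
    ∃ f : V → Fin b, Satisfies E R f := by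
  have hVar : ∀ x, (Var E x).Finite := fun x =>
    (finite_nbr_of_maxdeg_lt_top hfin x).subset Set.subset_union_left
  obtain ⟨d, rfl⟩ : ∃ d, Δ = d + 1 := ⟨Δ - 1, by omega⟩
  have hp : ∀ x, Real.exp 1 * (d + 1) * Nat.card (R.Rc x) < (b : ℝ) ^ (Var E x).ncard :=
    fun x => by simpa using mul_natCard_rc_lt R (hVar x) (by omega) (by positivity) (hmain x)
  exact exists_forall_restrict_mem_of_forall_finset (Var E) hVar R.R
    (exists_forall_mem_finset_restrict_mem R (by omega) hVar (encard_setOf_ne_rel_le hΔ) hp)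

open MTLLL in
/-- **Lovász Local Lemma** (Theorem 1.1): if `maxdeg(G)` is finite, `Δ ≥ 1` is the maximal
degree of `Rel(G)` and `1 - |𝐑(x)|/b^{|Var(x)|} < 1/(eΔ)` for all `x`, then there is a
satisfying `b`-colouring. -/
theorem lll_exists_satisfying_colouring
    {V : Type*} [Nonempty V] (E : V → V → Prop) (b : ℕ) (hb : 1 < b)
    (R : LocalRule E b) (hfin : maxdeg E < ⊤)
    (Δ : ℕ) (hΔ : maxdeg (Rel E) = (Δ : ℕ∞)) (hΔ1 : 1 ≤ Δ)
    (hmain : ∀ x : V,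
      1 - (Nat.card (R.R x) : ℝ) / (b : ℝ) ^ (Var E x).ncard < 1 / (Real.exp 1 * Δ)) :
    ∃ f : V → Fin b, Satisfies E R f :=
  lll_exists_satisfying_colouring_general E b hb R hfin Δ hΔ hΔ1 hmain
end

section
/- Let (G,𝐑,π) be a Moser–Tardos tuple with G a finite digraph, fix an independence function on Rel(G), and let rnd ∈ b^{π×ℕ}. If h^∞(x) < ∞ for every x ∈ V(G), then there exists i ∈ ℕ with B(MT^i) = ∅; in particular MT^i satisfies 𝐑 and MT^j = MT^i for all j ≥ i. -/
open MeasureTheory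
open scoped Classical ENNReal

namespace MTLLL

variable {V ι : Type*} {E : V → V → Prop} {b : ℕ}

theorem satisfies_iff_bad_eq_empty (R : LocalRule E b) (f : V → Fin b) :
    Satisfies E R f ↔ bad E R f = ∅ := by
  simp [Satisfies, bad, LocalRule.Rc, Set.eq_empty_iff_forall_notMem]

theorem LocalRule.var_nonempty_of_mem_bad (R : LocalRule E b) {f : V → Fin b} {x : V}
    (hx : x ∈ bad E R f) : (Var E x).Nonempty := by
  rw [Set.nonempty_iff_ne_empty]
  intro h
  simp [bad, LocalRule.Rc, R.isFull_of_empty x h] at hx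

@[simp]
theorem varSet_empty : VarSet E (∅ : Set V) = ∅ := by
  simp [VarSet]

section IndepFun

variable {E' : V → V → Prop} {I : Set V → Set V}

theorem MaxIndepIn.nonempty {X J : Set V} (h : MaxIndepIn E' X J) (hX : X.Nonempty) :
    J.Nonempty := by
  obtain ⟨x, hx⟩ := hX
  by_contra hJ
  rw [Set.not_nonempty_iff_eq_empty] at hJ
  have hsingle : Indep E' {x} := fun a ha c hc hac => absurd (ha.trans hc.symm) hac
  have := h.2.2 {x} (hJ ▸ Set.empty_subset _) (Set.singleton_subset_iff.2 hx) hsingle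
  exact Set.singleton_ne_empty x (this.trans hJ)

theorem IndepFun.apply_empty (hI : IndepFun E' I) : I ∅ = ∅ :=
  Set.subset_empty_iff.mp (hI ∅).1

theorem IndepFun.varSet_bad_nonempty (hI : IndepFun E' I) (R : LocalRule E b)
    {f : V → Fin b} (hf : (bad E R f).Nonempty) : (VarSet E (I (bad E R f))).Nonempty := by
  obtain ⟨x, hx⟩ := (hI (bad E R f)).nonempty hf
  obtain ⟨y, hy⟩ := R.var_nonempty_of_mem_bad ((hI (bad E R f)).1 hx)
  exact ⟨y, Set.mem_biUnion hx hy⟩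

end IndepFun

section Run

variable (E) (R : LocalRule E b) (part : V → ι) (I : Set V → Set V) (rnd : ι × ℕ → Fin b)

theorem MT_succ (j : ℕ) :
    MT E R part I rnd (j + 1) = fun x =>
      if x ∈ VarSet E (I (bad E R (MT E R part I rnd j))) then
        rnd (part x, hres E R part I rnd (j + 1) x)
      else MT E R part I rnd j x :=
  rfl

theorem hres_succ_succ (j : ℕ) (x : V) :
    hres E R part I rnd (j + 2) x =
      if x ∈ VarSet E (I (bad E R (MT E R part I rnd j))) then
        hres E R part I rnd (j + 1) x + 1
      else hres E R part I rnd (j + 1) x :=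
  rfl

theorem hres_monotone (x : V) : Monotone (hres E R part I rnd · x) := by
  refine monotone_nat_of_le_succ fun k => ?_
  cases k with
  | zero => exact Nat.zero_le _
  | succ j =>
    rw [hres_succ_succ]
    split_ifs <;> omega

theorem eventually_hres_eq_hinf {x : V} (hx : hinf E R part I rnd x < ⊤) :
    ∀ᶠ k in Filter.atTop, (hres E R part I rnd k x : ℕ∞) = hinf E R part I rnd x := by
  obtain ⟨k₀, hk₀⟩ := ENat.exists_eq_iSup_of_lt_top hx
  refine Filter.eventually_atTop.2 ⟨k₀, fun k hk => le_antisymm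
    (le_iSup (fun k => (hres E R part I rnd k x : ℕ∞)) k) ?_⟩
  rw [hinf, ← hk₀]
  exact_mod_cast hres_monotone E R part I rnd x hk

/-- Once every counter has reached its finite limit `h^∞(x)`, a round resamples nothing, and a
round with a violated clause always resamples something. -/
theorem exists_bad_MT_eq_empty [Finite V] {E' : V → V → Prop} (hI : IndepFun E' I)
    (hfin : ∀ x : V, hinf E R part I rnd x < ⊤) :
    ∃ i : ℕ, bad E R (MT E R part I rnd i) = ∅ := by
  obtain ⟨i, hi⟩ := Filter.eventually_atTop.1 <|
    Filter.eventually_all.2 fun x => eventually_hres_eq_hinf E R part I rnd (hfin x)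
  refine ⟨i, Set.not_nonempty_iff_eq_empty.1 fun hbad => ?_⟩
  obtain ⟨x, hx⟩ := hI.varSet_bad_nonempty R hbad
  have hstable : (hres E R part I rnd (i + 2) x : ℕ∞) = hres E R part I rnd (i + 1) x := by
    rw [hi (i + 2) (by omega) x, hi (i + 1) (by omega) x]
  rw [hres_succ_succ, if_pos hx] at hstable
  exact absurd (Nat.cast_injective hstable) (Nat.succ_ne_self _)

theorem MT_eq_of_bad_eq_empty {E' : V → V → Prop} (hI : IndepFun E' I) {i j : ℕ}
    (hbad : bad E R (MT E R part I rnd i) = ∅) (hij : i ≤ j) :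
    MT E R part I rnd j = MT E R part I rnd i := by
  induction j, hij using Nat.le_induction with
  | base => rfl
  | succ j _ ih =>
    rw [MT_succ, ih, hbad, hI.apply_empty, varSet_empty]
    simp only [Set.mem_empty_iff_false, if_false]

end Run

end MTLLL

open MTLLL in
theorem mt_success_of_hinf_finite_general
    {V : Type*} [Fintype V] {ι : Type*}
    (E : V → V → Prop) (b : ℕ) (R : LocalRule E b) (part : V → ι)
    (I : Set V → Set V) (hI : IndepFun (Rel E) I) (rnd : ι × ℕ → Fin b)
    (hfin : ∀ x : V, hinf E R part I rnd x < ⊤) :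
    ∃ i : ℕ, bad E R (MT E R part I rnd i) = ∅ ∧
      Satisfies E R (MT E R part I rnd i) ∧
      ∀ j : ℕ, i ≤ j → MT E R part I rnd j = MT E R part I rnd i := by
  obtain ⟨i, hbad⟩ := exists_bad_MT_eq_empty E R part I rnd hI hfin
  exact ⟨i, hbad, (satisfies_iff_bad_eq_empty R _).2 hbad,
    fun j hij => MT_eq_of_bad_eq_empty E R part I rnd hI hbad hij⟩

open MTLLL in
/-- If in a run of the Moser–Tardos algorithm on a finite digraph every vertex is resampled
only finitely often, then the algorithm succeeds: some `MT^i` has empty bad set, satisfies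
the rule, and the run stabilises at `MT^i`. -/
theorem mt_success_of_hinf_finite
    {V : Type*} [Nonempty V] [Fintype V] {ι : Type*} [Finite ι]
    (E : V → V → Prop) (b : ℕ) (hb : 1 < b) (R : LocalRule E b) (part : V → ι)
    (I : Set V → Set V) (hI : IndepFun (Rel E) I) (rnd : ι × ℕ → Fin b)
    (hfin : ∀ x : V, hinf E R part I rnd x < ⊤) :
    ∃ i : ℕ, bad E R (MT E R part I rnd i) = ∅ ∧
      Satisfies E R (MT E R part I rnd i) ∧
      ∀ j : ℕ, i ≤ j → MT E R part I rnd j = MT E R part I rnd i :=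
  mt_success_of_hinf_finite_general E b R part I hI rnd hfin
end

section
/- For every Δ ∈ ℕ₊ and every i ∈ ℕ₊, the number P_i of isomorphism classes of Δ-labelled trees with exactly i vertices satisfies P_i ≤ (eΔ)^i. -/
open MeasureTheory
open scoped Classical ENNReal

namespace MTLLL

/-- A set of label sequences is prefix-closed. A `Δ`-labelled tree (a finite directed tree
with in-degrees `0` or `1` and out-edges carrying distinct labels from `{0,…,Δ-1}`) is
determined up to isomorphism by the prefix-closed set of label sequences read along the
paths from the root; thus isomorphism classes of `Δ`-labelled trees with `i` vertices
correspond exactly to finite prefix-closed sets `S ⊆ List (Fin Δ)` with `|S| = i`. -/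
def PrefClosed {Δ : ℕ} (S : Set (List (Fin Δ))) : Prop :=
  ∀ l ∈ S, ∀ l' : List (Fin Δ), l' <+: l → l' ∈ S

/-- The type of isomorphism classes of `Δ`-labelled trees, encoded canonically as finite
prefix-closed sets of label sequences. -/
def LabTree (Δ : ℕ) : Type :=
  {S : Set (List (Fin Δ)) // S.Finite ∧ PrefClosed S}

/-- The number of vertices of (the isomorphism class of) a `Δ`-labelled tree. -/
noncomputable def LabTree.size {Δ : ℕ} (T : LabTree Δ) : ℕ := T.1.ncard

end MTLLL

/-!
List the vertices of a tree, i.e. its label sequences, in lexicographic order. Every vertex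
other than the root is `p ++ [a]` for a vertex `p` listed earlier, so recording the pairs
(position of `p`, `a`) gives an `(i - 1)`-subset of `Fin i × Fin Δ`, from which the tree is
recovered one vertex at a time. Hence `P_i ≤ C(iΔ, i - 1) ≤ (iΔ)^(i-1) / (i-1)! ≤ (eΔ)^i`.
-/

namespace Finset

variable {β : Type*} [LinearOrder β] {s t : Finset β} {i : ℕ}

theorem orderEmbOfFin_le_of_mem (hs : s.card = i) (ht : t.card = i) {k : Fin i}
    (hbelow : ∀ j < k, s.orderEmbOfFin hs j = t.orderEmbOfFin ht j)
    (hk : s.orderEmbOfFin hs k ∈ t) :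
    t.orderEmbOfFin ht k ≤ s.orderEmbOfFin hs k := by
  obtain ⟨m, hm⟩ : s.orderEmbOfFin hs k ∈ Set.range (t.orderEmbOfFin ht) := by
    rwa [range_orderEmbOfFin]
  have hkm : k ≤ m := by
    by_contra! hmk
    rw [← hbelow m hmk] at hm
    exact hmk.ne ((s.orderEmbOfFin hs).injective hm)
  exact hm ▸ (t.orderEmbOfFin ht).monotone hkm

end Finset

theorem List.lt_append_singleton {α : Type*} [LinearOrder α] (p : List α) (a : α) :
    p < p ++ [a] := by
  simpa using Lex.append_left (· < ·) (Lex.nil (a := a) (l := [])) p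

namespace MTLLL

section ChildCode

variable {α : Type*} [LinearOrder α] {S S' : Finset (List α)} {i : ℕ}

theorem exists_orderEmbOfFin_eq_of_append_mem (hS : ∀ l ∈ S, ∀ l', l' <+: l → l' ∈ S)
    (h : S.card = i) {p : List α} {a : α} (hpa : p ++ [a] ∈ S) :
    ∃ k, S.orderEmbOfFin h k = p := by
  have hp : p ∈ (S : Set (List α)) := hS _ hpa p (List.prefix_append p [a])
  rwa [← Finset.range_orderEmbOfFin S h] at hp

variable [Fintype α]

noncomputable def childCode (S : Finset (List α)) (h : S.card = i) : Finset (Fin i × α) :=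
  {p | S.orderEmbOfFin h p.1 ++ [p.2] ∈ S}

theorem mem_childCode {h : S.card = i} {p : Fin i × α} :
    p ∈ childCode S h ↔ S.orderEmbOfFin h p.1 ++ [p.2] ∈ S := by
  simp [childCode]

theorem card_childCode (hS : ∀ l ∈ S, ∀ l', l' <+: l → l' ∈ S) (h : S.card = i) :
    (childCode S h).card = i - 1 := by
  have hbij : (childCode S h).card = (S.erase []).card := by
    refine Finset.card_nbij (fun p => S.orderEmbOfFin h p.1 ++ [p.2]) ?_ ?_ ?_
    · intro p hp
      exact Finset.mem_erase.mpr ⟨by simp, mem_childCode.mp hp⟩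
    · intro p _ q _ hpq
      obtain ⟨h₁, h₂⟩ := List.append_inj' hpq rfl
      exact Prod.ext ((S.orderEmbOfFin h).injective h₁) (by simpa using h₂)
    · intro l hl
      obtain ⟨hne, hlS⟩ := Finset.mem_erase.mp hl
      obtain ⟨p, a, rfl⟩ := (List.eq_nil_or_concat' l).resolve_left hne
      obtain ⟨k, hk⟩ := exists_orderEmbOfFin_eq_of_append_mem hS h hlS
      exact ⟨(k, a), mem_childCode.mpr (hk ▸ hlS), by simp [hk]⟩
  rw [hbij, Finset.card_erase_eq_ite, h]
  split_ifs with hnil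
  · rfl
  · obtain rfl : S = ∅ := Finset.eq_empty_of_forall_notMem fun l hl =>
      hnil (hS l hl [] List.nil_prefix)
    simp [← h]

theorem orderEmbOfFin_mem_of_childCode_eq (hS : ∀ l ∈ S, ∀ l', l' <+: l → l' ∈ S)
    (hS' : ∀ l ∈ S', ∀ l', l' <+: l → l' ∈ S') (h : S.card = i) (h' : S'.card = i)
    (hcode : childCode S h = childCode S' h') {k : Fin i}
    (hbelow : ∀ j < k, S.orderEmbOfFin h j = S'.orderEmbOfFin h' j) :
    S.orderEmbOfFin h k ∈ S' := by
  rcases List.eq_nil_or_concat' (S.orderEmbOfFin h k) with hnil | ⟨p, a, hpa⟩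
  · obtain ⟨l, hl⟩ := Finset.card_pos.mp (h' ▸ k.pos)
    exact hnil ▸ hS' l hl [] List.nil_prefix
  · have hk := S.orderEmbOfFin_mem h k
    obtain ⟨j, hj⟩ := exists_orderEmbOfFin_eq_of_append_mem hS h (hpa ▸ hk)
    have hjk : j < k := (S.orderEmbOfFin h).lt_iff_lt.mp <| by
      rw [hj, hpa]
      exact List.lt_append_singleton p a
    have hja : (j, a) ∈ childCode S' h' := hcode ▸ mem_childCode.mpr (by rwa [hj, ← hpa])
    rw [hpa, ← hj, hbelow j hjk]
    exact mem_childCode.mp hja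

theorem childCode_injective (hS : ∀ l ∈ S, ∀ l', l' <+: l → l' ∈ S)
    (hS' : ∀ l ∈ S', ∀ l', l' <+: l → l' ∈ S') (h : S.card = i) (h' : S'.card = i)
    (hcode : childCode S h = childCode S' h') : S = S' := by
  have hagree : ∀ k, S.orderEmbOfFin h k = S'.orderEmbOfFin h' k := by
    intro k
    induction k using WellFoundedLT.induction with
    | _ k ih =>
      have ih' : ∀ j < k, S'.orderEmbOfFin h' j = S.orderEmbOfFin h j :=
        fun j hj => (ih j hj).symm
      exact le_antisymm
        (Finset.orderEmbOfFin_le_of_mem h' h ih'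
          (orderEmbOfFin_mem_of_childCode_eq hS' hS h' h hcode.symm ih'))
        (Finset.orderEmbOfFin_le_of_mem h h' ih
          (orderEmbOfFin_mem_of_childCode_eq hS hS' h h' hcode ih))
  rw [← Finset.coe_inj, ← Finset.range_orderEmbOfFin S h, ← Finset.range_orderEmbOfFin S' h']
  exact congrArg Set.range (funext hagree)

end ChildCode

namespace LabTree

variable {Δ i : ℕ}

noncomputable def toFinset (T : LabTree Δ) : Finset (List (Fin Δ)) := T.2.1.toFinset

theorem card_toFinset (T : LabTree Δ) : T.toFinset.card = T.size :=
  (Set.ncard_eq_toFinset_card _ T.2.1).symm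

theorem prefix_mem_toFinset (T : LabTree Δ) :
    ∀ l ∈ T.toFinset, ∀ l', l' <+: l → l' ∈ T.toFinset := by
  simpa [toFinset, PrefClosed] using T.2.2

theorem toFinset_injective : Function.Injective (toFinset (Δ := Δ)) := fun _ _ hT =>
  Subtype.ext <| by simpa [toFinset] using hT

noncomputable def childCode (T : {T : LabTree Δ // T.size = i}) :
    {A : Finset (Fin i × Fin Δ) // A.card = i - 1} :=
  ⟨MTLLL.childCode T.1.toFinset ((card_toFinset _).trans T.2),
    card_childCode (prefix_mem_toFinset _) _⟩

theorem childCode_injective : Function.Injective (childCode (Δ := Δ) (i := i)) :=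
  fun _ _ hT => Subtype.ext <| toFinset_injective <|
    MTLLL.childCode_injective (prefix_mem_toFinset _) (prefix_mem_toFinset _) _ _
      (congrArg Subtype.val hT)

end LabTree

theorem choose_mul_sub_one_le_exp_mul_pow {Δ : ℕ} (hΔ : 1 ≤ Δ) (n : ℕ) :
    ((n * Δ).choose (n - 1) : ℝ) ≤ (Real.exp 1 * Δ) ^ n :=
  calc ((n * Δ).choose (n - 1) : ℝ)
      ≤ ((n * Δ : ℕ) : ℝ) ^ (n - 1) / (n - 1).factorial := Nat.choose_le_pow_div _ _
    _ = (n : ℝ) ^ (n - 1) / (n - 1).factorial * (Δ : ℝ) ^ (n - 1) := by push_cast; ring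
    _ ≤ Real.exp n * (Δ : ℝ) ^ n :=
        mul_le_mul (Real.pow_div_factorial_le_exp _ n.cast_nonneg _)
          (pow_le_pow_right₀ (by exact_mod_cast hΔ) (Nat.sub_le n 1)) (by positivity)
          (Real.exp_nonneg _)
    _ = (Real.exp 1 * Δ) ^ n := by rw [mul_pow, ← Real.exp_nat_mul, mul_one]

end MTLLL

open MTLLL in
theorem count_labelled_trees_general (Δ : ℕ) (hΔ : 1 ≤ Δ) (i : ℕ) :
    (Nat.card {T : LabTree Δ // T.size = i} : ℝ) ≤ (Real.exp 1 * Δ) ^ i := by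
  have hcount : Nat.card {T : LabTree Δ // T.size = i} ≤ (i * Δ).choose (i - 1) :=
    calc Nat.card {T : LabTree Δ // T.size = i}
        ≤ Nat.card {A : Finset (Fin i × Fin Δ) // A.card = i - 1} :=
          Nat.card_le_card_of_injective _ LabTree.childCode_injective
      _ = (i * Δ).choose (i - 1) := by
          simp [Nat.card_eq_fintype_card, Fintype.card_finset_len]
  exact (Nat.cast_le.mpr hcount).trans (choose_mul_sub_one_le_exp_mul_pow hΔ i)

open MTLLL in
/-- Lemma 3.6(a): the number `P_i` of isomorphism classes of `Δ`-labelled trees with `i`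
vertices is at most `(eΔ)^i`. -/
theorem count_labelled_trees (Δ : ℕ) (hΔ : 1 ≤ Δ) (i : ℕ) (hi : 1 ≤ i) :
    (Nat.card {T : LabTree Δ // T.size = i} : ℝ) ≤ (Real.exp 1 * Δ) ^ i :=
  count_labelled_trees_general Δ hΔ i
end

section
/- Let M = (G,𝐑,π) be a Moser–Tardos tuple with G a finite digraph, and let L be a finalised M-landscape. Then there exists a grounded finalised M-landscape K that is equivalent to L, i.e. the forest of K is grounded, |V(K)| = |V(L)| and Used_K = Used_L. -/
open MeasureTheory
open scoped Classical ENNReal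

namespace MTLLL

variable {V : Type*} {ι : Type*}

/-- A `G`-forest: a subdigraph of `Canvas(G)` (vertices `V × ℕ`, edges going up one level
between `Rel`-adjacent vertices) in which every vertex has in-degree `0` or `1`. -/
structure GForest (E : V → V → Prop) where
  verts : Set (V × ℕ)
  edges : V × ℕ → V × ℕ → Prop
  edges_mem_left : ∀ a c : V × ℕ, edges a c → a ∈ verts
  edges_mem_right : ∀ a c : V × ℕ, edges a c → c ∈ verts
  edges_rel : ∀ a c : V × ℕ, edges a c → Rel E a.1 c.1
  edges_level : ∀ a c : V × ℕ, edges a c → c.2 = a.2 + 1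
  indeg_le_one : ∀ c a a' : V × ℕ, edges a c → edges a' c → a = a'

/-- A forest is grounded if every root (in-degree `0` vertex) has level `0`. -/
def GForest.Grounded {E : V → V → Prop} (F : GForest E) : Prop :=
  ∀ a ∈ F.verts, (∀ a' : V × ℕ, ¬ F.edges a' a) → a.2 = 0

/-- A forest has finite height if its levels are bounded. -/
def GForest.FinHeight {E : V → V → Prop} (F : GForest E) : Prop :=
  ∃ j : ℕ, ∀ a ∈ F.verts, a.2 < j

/-- A forest is independent if each of its level sets is independent in `Rel(G)`. -/
def GForest.LevelIndep {E : V → V → Prop} (F : GForest E) : Prop :=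
  ∀ i : ℕ, Indep (Rel E) {x : V | (x, i) ∈ F.verts}

/-- `varcount(F) = |V(G)| + Σ_{(x,i) ∈ V(F)} |Var(x)|`. -/
noncomputable def GForest.varcount {E : V → V → Prop} (F : GForest E) : ℕ :=
  Nat.card V + ∑ᶠ a ∈ F.verts, (Var E (Prod.fst a)).ncard

/-- The set of roots of airborne trees (trees whose root has positive level). -/
def airborneRoots {E : V → V → Prop} (F : GForest E) : Set (V × ℕ) :=
  {a ∈ F.verts | (∀ a' : V × ℕ, ¬ F.edges a' a) ∧ 0 < a.2}

/-- A finalised `M`-landscape: an independent `G`-forest of finite height together with a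
violation datum `vio (x,i) ∈ 𝐑ᶜ(x)` at each of its vertices, and a final colouring. -/
structure FinLandscape (E : V → V → Prop) (b : ℕ) (R : LocalRule E b) where
  F : GForest E
  levelIndep : F.LevelIndep
  finHeight : F.FinHeight
  vio : ∀ a : F.verts, Var E (a : V × ℕ).1 → Fin b
  vio_not_mem : ∀ a : F.verts, vio a ∈ R.Rc (a : V × ℕ).1
  fin : V → Fin b

/-- The sequence `Used_L(x)`: the values `vio(y,s)(x)` over the (at most one per level)
vertices `(y,s)` of the forest with `x ∈ Var(y)`, in increasing order of level, followed by
the final value `fin x`. -/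
noncomputable def FinLandscape.Used {E : V → V → Prop} {b : ℕ} {R : LocalRule E b}
    (L : FinLandscape E b R) (x : V) : List (Fin b) :=
  ((List.range (Nat.find L.finHeight)).filterMap fun i =>
    if h : ∃ y : V, ∃ _ : (y, i) ∈ L.F.verts, x ∈ Var E y then
      some (L.vio ⟨(h.choose, i), h.choose_spec.choose⟩ ⟨x, h.choose_spec.choose_spec⟩)
    else none) ++ [L.fin x]

/-- The finalised landscape `L^k` associated to a run of the Moser–Tardos algorithm
(relative to a linear order used to pick parents in the forest). -/
noncomputable def runLandscape (E : V → V → Prop) {b : ℕ} (R : LocalRule E b)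
    (part : V → ι) {I : Set V → Set V} (hI : IndepFun (Rel E) I)
    (rnd : ι × ℕ → Fin b) (lo : LinearOrder V) (k : ℕ) :
    FinLandscape E b R where
  F :=
    { verts := {a : V × ℕ | a.2 < k ∧ a.1 ∈ I (bad E R (MT E R part I rnd a.2))}
      edges := fun a c =>
        (c.2 < k ∧ c.1 ∈ I (bad E R (MT E R part I rnd c.2))) ∧ c.2 = a.2 + 1 ∧
        (a.1 ∈ I (bad E R (MT E R part I rnd a.2)) ∧ (Var E a.1 ∩ Var E c.1).Nonempty) ∧
        ∀ z : V, z ∈ I (bad E R (MT E R part I rnd a.2)) →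
          (Var E z ∩ Var E c.1).Nonempty → lo.le a.1 z
      edges_mem_left := by
        rintro a c ⟨⟨hck, -⟩, hlev, ⟨haI, -⟩, -⟩
        exact ⟨by omega, haI⟩
      edges_mem_right := fun a c h => h.1
      edges_rel := fun a c h => h.2.2.1.2
      edges_level := fun a c h => h.2.1
      indeg_le_one := by
        rintro c a a' ⟨-, hlev, ⟨haI, haV⟩, hmin⟩ ⟨-, hlev', ⟨haI', haV'⟩, hmin'⟩
        have h2 : a.2 = a'.2 := by omega
        rw [h2] at haI hmin
        have h1 : a.1 = a'.1 := lo.le_antisymm _ _ (hmin _ haI' haV') (hmin' _ haI haV)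
        exact Prod.ext h1 h2 }
  levelIndep := by
    intro i x hx y hy hxy
    exact (hI (bad E R (MT E R part I rnd i))).2.1 x hx.2 y hy.2 hxy
  finHeight := ⟨k, fun a ha => ha.1⟩
  vio := fun a => fun y => MT E R part I rnd (a : V × ℕ).2 y.1
  vio_not_mem := fun a => (hI (bad E R (MT E R part I rnd (a : V × ℕ).2))).1 a.2.2
  fin := MT E R part I rnd k

end MTLLL

/-!
If a vertex `(x, ℓ + 1)` of a landscape has no `Rel`-neighbour at level `ℓ`, it can be moved
down to `(x, ℓ)`: the levels stay independent, and for `w ∈ Var x` no vertex `(y, ℓ)` has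
`w ∈ Var y` (it would be `Rel`-adjacent to `x`), so every sequence `Used w` is unchanged. Each
move lowers the sum of the levels, so after finitely many moves every vertex above level `0`
has a `Rel`-neighbour one level below. Choosing one as its parent gives a grounded forest on
the same vertices, and `Used` does not see the forest edges.
-/

theorem finsum_mem_lt_finsum_mem {α M : Type*} [AddCommMonoid M] [PartialOrder M]
    [IsOrderedCancelAddMonoid M] {f g : α → M} {s : Set α} (hs : s.Finite)
    (hle : ∀ a ∈ s, f a ≤ g a) (hlt : ∃ a ∈ s, f a < g a) :
    ∑ᶠ a ∈ s, f a < ∑ᶠ a ∈ s, g a := by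
  rw [finsum_mem_eq_finite_toFinset_sum f hs, finsum_mem_eq_finite_toFinset_sum g hs]
  exact Finset.sum_lt_sum (by simpa using hle) (by simpa using hlt)

theorem List.filterMap_range_comp_swap {α : Type*} {f : ℕ → Option α} {ℓ n : ℕ}
    (hf : f ℓ = none) (hn : ℓ + 2 ≤ n) :
    (List.range n).filterMap (f ∘ Equiv.swap ℓ (ℓ + 1)) = (List.range n).filterMap f := by
  obtain ⟨k, rfl⟩ := Nat.exists_eq_add_of_le hn
  have hfix : ∀ i, i ≠ ℓ → i ≠ ℓ + 1 → (f ∘ Equiv.swap ℓ (ℓ + 1)) i = f i := fun i h₁ h₂ => by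
    simp [Equiv.swap_apply_of_ne_of_ne h₁ h₂]
  have hlow : (List.range ℓ).filterMap (f ∘ Equiv.swap ℓ (ℓ + 1)) = (List.range ℓ).filterMap f :=
    List.filterMap_congr fun i hi => by
      have := List.mem_range.mp hi
      exact hfix i (by omega) (by omega)
  have hhigh : ((List.range k).map (ℓ + 2 + ·)).filterMap (f ∘ Equiv.swap ℓ (ℓ + 1)) =
      ((List.range k).map (ℓ + 2 + ·)).filterMap f :=
    List.filterMap_congr fun i hi => by
      obtain ⟨c, -, rfl⟩ := List.mem_map.mp hi
      exact hfix _ (by omega) (by omega)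
  rw [List.range_add, List.range_succ, List.range_succ, List.filterMap_append,
    List.filterMap_append, hhigh, List.filterMap_append, List.filterMap_append, hlow]
  simp [List.filterMap_cons, hf]

namespace MTLLL

variable {V : Type*} {E : V → V → Prop} {b : ℕ} {R : LocalRule E b}

theorem Rel.symm {x y : V} (h : Rel E x y) : Rel E y x :=
  let ⟨z, hx, hy⟩ := h; ⟨z, hy, hx⟩

def IsSupported (E : V → V → Prop) (W : Set (V × ℕ)) : Prop :=
  ∀ x ℓ, (x, ℓ + 1) ∈ W → ∃ y, (y, ℓ) ∈ W ∧ Rel E y x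

namespace GForest

def edgeless (W : Set (V × ℕ)) : GForest E where
  verts := W
  edges _ _ := False
  edges_mem_left _ _ h := h.elim
  edges_mem_right _ _ h := h.elim
  edges_rel _ _ h := h.elim
  edges_level _ _ h := h.elim
  indeg_le_one _ _ _ h := h.elim

def ofParent (W : Set (V × ℕ)) (parent : V × ℕ → V)
    (hparent : ∀ c ∈ W, 0 < c.2 → (parent c, c.2 - 1) ∈ W ∧ Rel E (parent c) c.1) :
    GForest E where
  verts := W
  edges a c := c ∈ W ∧ 0 < c.2 ∧ a = (parent c, c.2 - 1)
  edges_mem_left := by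
    rintro a c ⟨hc, hpos, rfl⟩
    exact (hparent c hc hpos).1
  edges_mem_right _ _ h := h.1
  edges_rel := by
    rintro a c ⟨hc, hpos, rfl⟩
    exact (hparent c hc hpos).2
  edges_level := by
    rintro a c ⟨-, hpos, rfl⟩
    dsimp only
    omega
  indeg_le_one := by
    rintro c a a' ⟨-, -, rfl⟩ ⟨-, -, rfl⟩
    rfl

theorem ofParent_grounded {W : Set (V × ℕ)} {parent : V × ℕ → V}
    (hparent : ∀ c ∈ W, 0 < c.2 → (parent c, c.2 - 1) ∈ W ∧ Rel E (parent c) c.1) :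
    (ofParent W parent hparent).Grounded := by
  intro a ha hroot
  by_contra hpos
  exact hroot _ ⟨ha, Nat.pos_of_ne_zero hpos, rfl⟩

end GForest

noncomputable def swapLevel (x : V) (ℓ : ℕ) (p : V × ℕ) : V × ℕ :=
  (p.1, if p.1 = x then Equiv.swap ℓ (ℓ + 1) p.2 else p.2)

theorem swapLevel_involutive (x : V) (ℓ : ℕ) : Function.Involutive (swapLevel x ℓ) := by
  rintro ⟨y, i⟩
  by_cases hy : y = x <;> simp [swapLevel, hy]

theorem swapLevel_of_fst_ne {x : V} {ℓ : ℕ} {p : V × ℕ} (h : p.1 ≠ x) : swapLevel x ℓ p = p := by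
  simp [swapLevel, h]

theorem swapLevel_of_snd_ne {x : V} {ℓ : ℕ} {p : V × ℕ} (h₁ : p.2 ≠ ℓ) (h₂ : p.2 ≠ ℓ + 1) :
    swapLevel x ℓ p = p := by
  simp [swapLevel, Equiv.swap_apply_of_ne_of_ne h₁ h₂]

theorem swapLevel_snd_le {x : V} {ℓ : ℕ} {p : V × ℕ} (h : p ≠ (x, ℓ)) :
    (swapLevel x ℓ p).2 ≤ p.2 := by
  obtain ⟨y, i⟩ := p
  unfold swapLevel
  split_ifs with hy
  · subst hy
    rw [Equiv.swap_apply_def]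
    split_ifs <;> simp_all
  · exact le_rfl

theorem snd_le_swapLevel_snd_add_one (x : V) (ℓ : ℕ) (p : V × ℕ) :
    p.2 ≤ (swapLevel x ℓ p).2 + 1 := by
  unfold swapLevel
  split_ifs
  · rw [Equiv.swap_apply_def]
    split_ifs <;> omega
  · omega

namespace FinLandscape

theorem rel_self_of_mem (L : FinLandscape E b R) {a : V × ℕ} (ha : a ∈ L.F.verts) :
    Rel E a.1 a.1 := by
  by_contra hself
  have hempty : Var E a.1 = ∅ := by
    simpa [Rel, Set.not_nonempty_iff_eq_empty] using hself
  exact L.vio_not_mem ⟨a, ha⟩ (by rw [R.isFull_of_empty _ hempty]; trivial)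

theorem verts_finite [Finite V] (L : FinLandscape E b R) : L.F.verts.Finite := by
  obtain ⟨j, hj⟩ := L.finHeight
  exact (Set.finite_univ.prod (Set.finite_Iio j)).subset fun a ha => ⟨trivial, hj a ha⟩

noncomputable def levelSum (L : FinLandscape E b R) : ℕ := ∑ᶠ a ∈ L.F.verts, a.2

theorem exists_grounded_of_isSupported (L : FinLandscape E b R) (hs : IsSupported E L.F.verts) :
    ∃ K : FinLandscape E b R, K.F.Grounded ∧ K.F.verts = L.F.verts ∧ K.Used = L.Used := by
  have hparent : ∀ c : V × ℕ, ∃ y, c ∈ L.F.verts → 0 < c.2 →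
      (y, c.2 - 1) ∈ L.F.verts ∧ Rel E y c.1 := by
    rintro ⟨x, _ | ℓ⟩
    · exact ⟨x, fun _ h => absurd h (lt_irrefl 0)⟩
    · by_cases hx : (x, ℓ + 1) ∈ L.F.verts
      · obtain ⟨y, hy⟩ := hs x ℓ hx
        exact ⟨y, fun _ _ => hy⟩
      · exact ⟨x, fun h => absurd h hx⟩
  choose parent hparent using hparent
  exact ⟨{ L with F := GForest.ofParent L.F.verts parent hparent },
    GForest.ofParent_grounded hparent, rfl, rfl⟩

/-- The contribution of level `i` to `L.Used w`. -/
noncomputable def entry (L : FinLandscape E b R) (w : V) (i : ℕ) : Option (Fin b) :=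
  if h : ∃ y : V, ∃ _ : (y, i) ∈ L.F.verts, w ∈ Var E y then
    some (L.vio ⟨(h.choose, i), h.choose_spec.choose⟩ ⟨w, h.choose_spec.choose_spec⟩)
  else none

theorem vio_congr (L : FinLandscape E b R) {a a' : V × ℕ} (h : a = a') (ha : a ∈ L.F.verts)
    (ha' : a' ∈ L.F.verts) {w : V} (hw : w ∈ Var E a.1) (hw' : w ∈ Var E a'.1) :
    L.vio ⟨a, ha⟩ ⟨w, hw⟩ = L.vio ⟨a', ha'⟩ ⟨w, hw'⟩ := by
  subst h
  rfl

theorem entry_eq_some (L : FinLandscape E b R) {a : V × ℕ} (ha : a ∈ L.F.verts) {w : V}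
    (hw : w ∈ Var E a.1) : L.entry w a.2 = some (L.vio ⟨a, ha⟩ ⟨w, hw⟩) := by
  have hex : ∃ y : V, ∃ _ : (y, a.2) ∈ L.F.verts, w ∈ Var E y := ⟨a.1, ha, hw⟩
  obtain ⟨hy, hwy⟩ := hex.choose_spec
  have hchoose : hex.choose = a.1 := by
    by_contra hne
    exact L.levelIndep a.2 _ hy a.1 ha hne ⟨w, hwy, hw⟩
  rw [entry, dif_pos hex]
  exact congrArg some (L.vio_congr (a := (hex.choose, a.2)) (Prod.ext hchoose rfl) _ _ _ _)

theorem entry_eq_none (L : FinLandscape E b R) {w : V} {i : ℕ}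
    (h : ∀ y, (y, i) ∈ L.F.verts → w ∉ Var E y) : L.entry w i = none :=
  dif_neg fun ⟨y, hy, hw⟩ => h y hy hw

theorem used_eq_filterMap_range (L : FinLandscape E b R) {j : ℕ}
    (hj : ∀ a ∈ L.F.verts, a.2 < j) (w : V) :
    L.Used w = (List.range j).filterMap (L.entry w) ++ [L.fin w] := by
  obtain ⟨k, hk⟩ := Nat.exists_eq_add_of_le (Nat.find_min' L.finHeight hj)
  have htop : ((List.range k).map (Nat.find L.finHeight + ·)).filterMap (L.entry w) = [] := by
    refine List.filterMap_eq_nil_iff.mpr fun i hi => L.entry_eq_none fun y hy _ => ?_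
    obtain ⟨c, -, rfl⟩ := List.mem_map.mp hi
    exact absurd (Nat.find_spec L.finHeight _ hy) (by simp)
  rw [hk, List.range_add, List.filterMap_append, htop, List.append_nil]
  rfl

theorem indep_preimage_swapLevel (L : FinLandscape E b R) {x : V} {ℓ : ℕ}
    (hx : (x, ℓ + 1) ∈ L.F.verts) (hfree : ∀ y, (y, ℓ) ∈ L.F.verts → ¬ Rel E y x) (i : ℕ) :
    Indep (Rel E) {y | (y, i) ∈ swapLevel x ℓ ⁻¹' L.F.verts} := by
  have key : ∀ u v, (u, i) ∈ swapLevel x ℓ ⁻¹' L.F.verts → (v, i) ∈ L.F.verts → u ≠ v →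
      v ≠ x → ¬ Rel E u v := by
    intro u v hu hv huv hvx hrel
    by_cases hux : u = x
    · subst hux
      simp only [Set.mem_preimage, swapLevel, if_true] at hu
      rcases eq_or_ne i ℓ with rfl | hiℓ
      · exact hfree v hv hrel.symm
      rcases eq_or_ne i (ℓ + 1) with rfl | hiℓ'
      · rw [Equiv.swap_apply_right] at hu
        exact hfree u hu (L.rel_self_of_mem hx)
      rw [Equiv.swap_apply_of_ne_of_ne hiℓ hiℓ'] at hu
      exact L.levelIndep i u hu v hv huv hrel
    · rw [Set.mem_preimage, swapLevel_of_fst_ne hux] at hu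
      exact L.levelIndep i u hu v hv huv hrel
  intro u hu v hv huv
  by_cases hvx : v = x
  · have hux : u ≠ x := hvx ▸ huv
    rw [Set.mem_ofPred_eq, Set.mem_preimage, swapLevel_of_fst_ne hux] at hu
    exact fun hrel => key v u hv hu huv.symm hux hrel.symm
  · rw [Set.mem_ofPred_eq, Set.mem_preimage, swapLevel_of_fst_ne hvx] at hv
    exact key u v hu hv huv hvx

theorem snd_lt_of_mem_preimage_swapLevel (L : FinLandscape E b R) {x : V} {ℓ j : ℕ}
    (hj : ∀ a ∈ L.F.verts, a.2 < j) {p : V × ℕ} (hp : p ∈ swapLevel x ℓ ⁻¹' L.F.verts) :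
    p.2 < j + 1 :=
  (snd_le_swapLevel_snd_add_one x ℓ p).trans_lt (Nat.succ_lt_succ (hj _ hp))

/-- Moves the vertex `(x, ℓ + 1)` down to `(x, ℓ)` and discards the forest edges. Exchanging
the two levels of `x` does this, as `(x, ℓ)` is not a vertex: `Rel E x x` holds for every
vertex of a landscape. -/
noncomputable def drop (L : FinLandscape E b R) (x : V) (ℓ : ℕ) (hx : (x, ℓ + 1) ∈ L.F.verts)
    (hfree : ∀ y, (y, ℓ) ∈ L.F.verts → ¬ Rel E y x) : FinLandscape E b R where
  F := GForest.edgeless (swapLevel x ℓ ⁻¹' L.F.verts)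
  levelIndep := L.indep_preimage_swapLevel hx hfree
  finHeight :=
    let ⟨j, hj⟩ := L.finHeight
    ⟨j + 1, fun _ hp => L.snd_lt_of_mem_preimage_swapLevel hj hp⟩
  vio p := L.vio ⟨swapLevel x ℓ p, p.2⟩
  vio_not_mem p := L.vio_not_mem ⟨swapLevel x ℓ p, p.2⟩
  fin := L.fin

section drop

variable (L : FinLandscape E b R) {x : V} {ℓ : ℕ} (hx : (x, ℓ + 1) ∈ L.F.verts)
  (hfree : ∀ y, (y, ℓ) ∈ L.F.verts → ¬ Rel E y x)

@[simp]
theorem mem_drop_verts {p : V × ℕ} :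
    p ∈ (L.drop x ℓ hx hfree).F.verts ↔ swapLevel x ℓ p ∈ L.F.verts :=
  Iff.rfl

theorem ncard_drop : (L.drop x ℓ hx hfree).F.verts.ncard = L.F.verts.ncard :=
  Set.ncard_preimage_of_injective_subset_range (swapLevel_involutive x ℓ).injective
    fun p _ => (swapLevel_involutive x ℓ).surjective p

theorem levelSum_drop_lt [Finite V] : (L.drop x ℓ hx hfree).levelSum < L.levelSum := by
  have hxℓ : (x, ℓ) ∉ L.F.verts := fun h => hfree x h (L.rel_self_of_mem hx)
  show ∑ᶠ p ∈ swapLevel x ℓ ⁻¹' L.F.verts, p.2 < ∑ᶠ p ∈ L.F.verts, p.2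
  rw [← (swapLevel_involutive x ℓ).image_eq_preimage_symm,
    finsum_mem_image (swapLevel_involutive x ℓ).injective.injOn]
  refine finsum_mem_lt_finsum_mem L.verts_finite
    (fun p hp => swapLevel_snd_le (ne_of_mem_of_not_mem hp hxℓ)) ⟨(x, ℓ + 1), hx, ?_⟩
  simp [swapLevel]

theorem entry_drop_of_swapLevel_eq {w : V} {i j : ℕ}
    (h : ∀ z, w ∈ Var E z → swapLevel x ℓ (z, i) = (z, j)) :
    (L.drop x ℓ hx hfree).entry w i = L.entry w j := by
  by_cases hex : ∃ z, (z, j) ∈ L.F.verts ∧ w ∈ Var E z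
  · obtain ⟨z, hz, hwz⟩ := hex
    have hzK : (z, i) ∈ swapLevel x ℓ ⁻¹' L.F.verts := by
      rw [Set.mem_preimage, h z hwz]
      exact hz
    rw [(L.drop x ℓ hx hfree).entry_eq_some (a := (z, i)) hzK hwz,
      L.entry_eq_some (a := (z, j)) hz hwz]
    exact congrArg some (L.vio_congr (h z hwz) _ _ _ _)
  · rw [L.entry_eq_none fun z hz hwz => hex ⟨z, hz, hwz⟩]
    refine entry_eq_none _ fun z hz hwz => hex ⟨z, ?_, hwz⟩
    rw [← h z hwz]
    exact hz

theorem entry_drop_of_not_mem {w : V} (hw : w ∉ Var E x) :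
    (L.drop x ℓ hx hfree).entry w = L.entry w :=
  funext fun _ => L.entry_drop_of_swapLevel_eq hx hfree fun _ hwz =>
    swapLevel_of_fst_ne fun hzx => hw (hzx ▸ hwz)

theorem entry_drop_of_mem {w : V} (hw : w ∈ Var E x) :
    (L.drop x ℓ hx hfree).entry w = L.entry w ∘ Equiv.swap ℓ (ℓ + 1) := by
  funext i
  rcases eq_or_ne i ℓ with hiℓ | hiℓ
  · subst i
    have hK : (x, ℓ) ∈ swapLevel x ℓ ⁻¹' L.F.verts := by simpa [swapLevel] using hx
    rw [Function.comp_apply, Equiv.swap_apply_left,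
      (L.drop x ℓ hx hfree).entry_eq_some (a := (x, ℓ)) hK hw,
      L.entry_eq_some (a := (x, ℓ + 1)) hx hw]
    exact congrArg some (L.vio_congr (by simp [swapLevel]) _ _ _ _)
  rcases eq_or_ne i (ℓ + 1) with rfl | hiℓ'
  · rw [Function.comp_apply, Equiv.swap_apply_right,
      L.entry_eq_none fun y hy hwy => hfree y hy ⟨w, hwy, hw⟩]
    refine entry_eq_none _ fun z hz hwz => ?_
    by_cases hzx : z = x
    · subst hzx
      exact hfree z (by simpa [swapLevel] using hz) (L.rel_self_of_mem hx)
    · rw [mem_drop_verts, swapLevel_of_fst_ne hzx] at hz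
      exact L.levelIndep _ z hz x hx hzx ⟨w, hwz, hw⟩
  · rw [Function.comp_apply, Equiv.swap_apply_of_ne_of_ne hiℓ hiℓ']
    exact L.entry_drop_of_swapLevel_eq hx hfree fun _ _ => swapLevel_of_snd_ne hiℓ hiℓ'

theorem used_drop : (L.drop x ℓ hx hfree).Used = L.Used := by
  obtain ⟨j, hj⟩ := L.finHeight
  have hL : ∀ a ∈ L.F.verts, a.2 < j + 1 := fun a ha => (hj a ha).trans (Nat.lt_succ_self j)
  have hK : ∀ a ∈ (L.drop x ℓ hx hfree).F.verts, a.2 < j + 1 :=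
    fun _ ha => L.snd_lt_of_mem_preimage_swapLevel hj ha
  funext w
  rw [used_eq_filterMap_range _ hK, used_eq_filterMap_range _ hL]
  by_cases hw : w ∈ Var E x
  · rw [L.entry_drop_of_mem hx hfree hw, List.filterMap_range_comp_swap
      (L.entry_eq_none fun y hy hwy => hfree y hy ⟨w, hwy, hw⟩) (by have := hj _ hx; omega)]
    rfl
  · rw [L.entry_drop_of_not_mem hx hfree hw]
    rfl

end drop

end FinLandscape

end MTLLL

open MTLLL in
theorem exists_equivalent_grounded_landscape_general
    {V : Type*} [Fintype V] (E : V → V → Prop)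
    (b : ℕ) (R : LocalRule E b) (L : FinLandscape E b R) :
    ∃ K : FinLandscape E b R, K.F.Grounded ∧
      K.F.verts.ncard = L.F.verts.ncard ∧ K.Used = L.Used := by
  induction hn : L.levelSum using Nat.strong_induction_on generalizing L with
  | _ n ih =>
    by_cases hs : IsSupported E L.F.verts
    · obtain ⟨K, hK, hverts, hused⟩ := L.exists_grounded_of_isSupported hs
      exact ⟨K, hK, congrArg Set.ncard hverts, hused⟩
    · simp only [IsSupported, not_forall, not_exists, not_and] at hs
      obtain ⟨x, ℓ, hx, hfree⟩ := hs
      obtain ⟨K, hK, hcard, hused⟩ := ih _ (hn ▸ L.levelSum_drop_lt hx hfree) _ rfl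
      exact ⟨K, hK, hcard.trans (L.ncard_drop hx hfree), hused.trans (L.used_drop hx hfree)⟩

open MTLLL in
/-- Proposition 3.9: every finalised landscape on a finite digraph is equivalent to a
grounded one (same number of forest vertices and the same `Used` function). -/
theorem exists_equivalent_grounded_landscape
    {V : Type*} [Nonempty V] [Fintype V] (E : V → V → Prop)
    (b : ℕ) (hb : 1 < b) (R : LocalRule E b) (L : FinLandscape E b R) :
    ∃ K : FinLandscape E b R, K.F.Grounded ∧
      K.F.verts.ncard = L.F.verts.ncard ∧ K.Used = L.Used :=
  exists_equivalent_grounded_landscape_general E b R L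
end
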